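/- Let n ≥ 1 and let 0 < r < R be real numbers. Define W(R) = {y ∈ ℝ^{n+1} : 0 < y₁² + ⋯ + yₙ² ≤ R² y₀² and y₀ > 0} and, for k = (k₁,…,kₙ) ∈ ℝⁿ, define W_k(r) = {y ∈ ℝ^{n+1} : 0 < y₁² + ⋯ + yₙ² ≤ r² (y₀ − Σᵢ kᵢ yᵢ)² and y₀ − Σᵢ kᵢ yᵢ > 0}. Then for every k ∈ ℝⁿ, W(R) is not contained in W_k(r); that is, there exists y ∈ W(R) with y ∉ W_k(r). -/

import Mathlib

/-!
The two points `(1, ±R e₁)` lie on the boundary of `W(R)`. Their values of `y₀ − Σ kᵢ yᵢ`,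
namely `1 ∓ k₁ R`, add up to `2`, so one of them lies in `(0, 1]` if both points are in
`W_k(r)`; at that point `R² = y₁² ≤ r² (1 ∓ k₁ R)² ≤ r²`, contradicting `r < R`.
-/

theorem sq_le_of_sq_le_mul_sq_of_add_eq_two {r R s t : ℝ} (hs : 0 < s) (ht : 0 < t)
    (hst : s + t = 2) (hRs : R ^ 2 ≤ r ^ 2 * s ^ 2) (hRt : R ^ 2 ≤ r ^ 2 * t ^ 2) :
    R ^ 2 ≤ r ^ 2 := by
  rcases le_total s 1 with h | h
  · calc R ^ 2 ≤ r ^ 2 * s ^ 2 := hRs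
      _ ≤ r ^ 2 * 1 := by gcongr; nlinarith
      _ = r ^ 2 := mul_one _
  · calc R ^ 2 ≤ r ^ 2 * t ^ 2 := hRt
      _ ≤ r ^ 2 * 1 := by gcongr; nlinarith
      _ = r ^ 2 := mul_one _

/-- `W(R) = {y : 0 < y₁² + ⋯ + yₙ² ≤ R² y₀², y₀ > 0}` is never contained in
`W_k(r) = {y : 0 < y₁² + ⋯ + yₙ² ≤ r² (y₀ − Σ kᵢ yᵢ)², y₀ − Σ kᵢ yᵢ > 0}` when `r < R`. -/
theorem shape_not_contained (n : ℕ) (hn : 1 ≤ n) (r R : ℝ) (hr : 0 < r) (hrR : r < R)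
    (k : Fin n → ℝ) :
    ¬ ({y : Fin (n + 1) → ℝ |
          (0 < ∑ i : Fin n, (y i.succ) ^ 2 ∧ ∑ i : Fin n, (y i.succ) ^ 2 ≤ R ^ 2 * (y 0) ^ 2)
          ∧ 0 < y 0} ⊆
        {y : Fin (n + 1) → ℝ |
          (0 < ∑ i : Fin n, (y i.succ) ^ 2 ∧
            ∑ i : Fin n, (y i.succ) ^ 2 ≤
              r ^ 2 * (y 0 - ∑ i : Fin n, k i * y i.succ) ^ 2)
          ∧ 0 < y 0 - ∑ i : Fin n, k i * y i.succ}) := by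
  intro hsub
  have hR : 0 < R := hr.trans hrR
  let j : Fin n := ⟨0, hn⟩
  have boundary_point_mem (a : ℝ) (ha : a ^ 2 = R ^ 2) :
      0 < 1 - k j * a ∧ R ^ 2 ≤ r ^ 2 * (1 - k j * a) ^ 2 := by
    obtain ⟨⟨-, hle⟩, hpos⟩ :=
      hsub (a := Fin.cons 1 (Pi.single j a)) (by simp [Pi.single_apply, ite_pow, ha, hR])
    simp [Pi.single_apply, ite_pow, ha] at hle hpos
    exact ⟨sub_pos.2 hpos, hle⟩
  obtain ⟨hpos_plus, hle_plus⟩ := boundary_point_mem R rfl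
  obtain ⟨hpos_minus, hle_minus⟩ := boundary_point_mem (-R) (neg_sq R)
  have hRr : R ^ 2 ≤ r ^ 2 :=
    sq_le_of_sq_le_mul_sq_of_add_eq_two hpos_plus hpos_minus (by ring) hle_plus hle_minus
  exact hRr.not_gt (pow_lt_pow_left₀ hrR hr.le two_ne_zero)
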